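/- Let S be an inverse semigroup satisfying xⁿ = xⁿ⁺¹ for some n ≥ 1. Then for all a, b ∈ S, (a·b⁻¹)ⁿ·a = (a·b⁻¹)ⁿ · b · (b⁻¹·a)ⁿ, and consequently (a·b⁻¹)ⁿ·a ≤ b in the natural partial order. -/
import Mathlib


/-- `pw x n` is the power `xⁿ` in a semigroup, for `n ≥ 1`
(with junk value `pw x 0 = x`). -/
def pw {S : Type*} [Mul S] (x : S) : ℕ → S
  | 0 => x
  | 1 => x
  | n + 2 => pw x (n + 1) * x

section Aux

variable {S : Type*} [Semigroup S]

lemma pw_succ (x : S) (k : ℕ) : pw x (k + 2) = pw x (k + 1) * x := rfl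

lemma pw_add (x : S) (m : ℕ) : ∀ k, pw x (m + k + 2) = pw x (m + 1) * pw x (k + 1)
  | 0 => pw_succ x m
  | k + 1 => by
      have h : m + (k + 1) + 2 = (m + k + 1) + 2 := by omega
      rw [h, pw_succ, show m + k + 1 = m + k + 1 from rfl]
      have h2 : m + k + 1 = m + k + 1 := rfl
      rw [show (m + k + 1) + 1 = m + k + 2 from rfl] at *
      rw [pw_add x m k, pw_succ, mul_assoc]

lemma pw_stable (x : S) (m : ℕ) (hx : pw x (m + 1) = pw x (m + 2)) :
    ∀ d, pw x (m + 1 + d) = pw x (m + 1)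
  | 0 => rfl
  | d + 1 => by
      have h : m + 1 + (d + 1) = (m + d) + 2 := by omega
      rw [h, pw_succ, show m + d + 1 = m + 1 + d from by omega,
        pw_stable x m hx d, ← pw_succ, ← hx]

lemma pw_shift (u v : S) : ∀ k, pw (u * v) (k + 1) * u = u * pw (v * u) (k + 1)
  | 0 => mul_assoc u v u
  | k + 1 => by
      calc pw (u * v) (k + 2) * u
          = pw (u * v) (k + 1) * ((u * v) * u) := by rw [pw_succ, mul_assoc]
        _ = pw (u * v) (k + 1) * (u * (v * u)) := by rw [mul_assoc]
        _ = (pw (u * v) (k + 1) * u) * (v * u) := by rw [mul_assoc]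
        _ = (u * pw (v * u) (k + 1)) * (v * u) := by rw [pw_shift u v k]
        _ = u * (pw (v * u) (k + 1) * (v * u)) := by rw [mul_assoc]
        _ = u * pw (v * u) (k + 2) := by rw [pw_succ]

lemma pw_absorb_left (x e : S) (hex : e * x = x) :
    ∀ k, e * pw x (k + 1) = pw x (k + 1)
  | 0 => hex
  | k + 1 => by rw [pw_succ, ← mul_assoc, pw_absorb_left x e hex k]

variable (inv : S → S)
    (h1 : ∀ x, x * inv x * x = x)
    (h2 : ∀ x, inv x * x * inv x = inv x)
    (huniq : ∀ x y, x * y * x = x → y * x * y = y → y = inv x)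

include huniq in
lemma idem_inv {e : S} (he : e * e = e) : inv e = e :=
  (huniq e e (by rw [he, he]) (by rw [he, he])).symm

include h1 h2 huniq in
lemma idem_mul {e f : S} (he : e * e = e) (hf : f * f = f) :
    (e * f) * (e * f) = e * f := by
  set x := inv (e * f) with hxdef
  have hx1 : (e * f) * x * (e * f) = e * f := h1 _
  have hx2 : x * (e * f) * x = x := h2 _
  have he' : ∀ z : S, e * (e * z) = e * z := fun z => by rw [← mul_assoc, he]
  have hf' : ∀ z : S, f * (f * z) = f * z := fun z => by rw [← mul_assoc, hf]
  have hx2' : ∀ z : S, x * (e * (f * (x * z))) = x * z := fun z => by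
    simpa only [mul_assoc] using congrArg (· * z) hx2
  have hx1r : e * (f * (x * (e * f))) = e * f := by
    simpa only [mul_assoc] using hx1
  -- y = f * x * e is also an inverse of e * f, and it is idempotent
  have hy1 : (e * f) * (f * (x * e)) * (e * f) = e * f := by
    simp only [mul_assoc]
    rw [hf', he']
    exact hx1r
  have hy2 : (f * (x * e)) * (e * f) * (f * (x * e)) = f * (x * e) := by
    simp only [mul_assoc]
    rw [he', hf', hx2']
  have hy_eq : f * (x * e) = x := huniq (e * f) _ hy1 hy2
  have hy_idem : (f * (x * e)) * (f * (x * e)) = f * (x * e) := by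
    simp only [mul_assoc]
    rw [hx2']
  have hxx : x * x = x := by rw [← hy_eq]; exact hy_idem
  have hef : e * f = x := by
    have h3 : e * f = inv x := huniq x (e * f) hx2 hx1
    rw [h3, idem_inv inv huniq hxx]
  rw [hef, hxx]

include h1 h2 huniq in
lemma idem_comm {e f : S} (he : e * e = e) (hf : f * f = f) :
    e * f = f * e := by
  have hef : (e * f) * (e * f) = e * f := idem_mul inv h1 h2 huniq he hf
  have hfe : (f * e) * (f * e) = f * e := idem_mul inv h1 h2 huniq hf he
  have he' : ∀ z : S, e * (e * z) = e * z := fun z => by rw [← mul_assoc, he]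
  have hf' : ∀ z : S, f * (f * z) = f * z := fun z => by rw [← mul_assoc, hf]
  have hefr : e * (f * (e * f)) = e * f := by simpa only [mul_assoc] using hef
  have hfer : f * (e * (f * e)) = f * e := by simpa only [mul_assoc] using hfe
  have H1 : (e * f) * (f * e) * (e * f) = e * f := by
    simp only [mul_assoc]
    rw [hf', he']
    exact hefr
  have H2 : (f * e) * (e * f) * (f * e) = f * e := by
    simp only [mul_assoc]
    rw [he', hf']
    exact hfer
  have h3 : f * e = inv (e * f) := huniq (e * f) (f * e) H1 H2
  rw [h3, idem_inv inv huniq hef]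

end Aux

/-- In an inverse semigroup satisfying xⁿ = xⁿ⁺¹ (n ≥ 1):
(a * b⁻¹)ⁿ * a = (a * b⁻¹)ⁿ * b * (b⁻¹ * a)ⁿ, and hence
(a * b⁻¹)ⁿ * a ≤ b in the natural partial order. -/
theorem stmt_6 {S : Type*} [Semigroup S] (inv : S → S)
    (h1 : ∀ x, x * inv x * x = x)
    (h2 : ∀ x, inv x * x * inv x = inv x)
    (huniq : ∀ x y, x * y * x = x → y * x * y = y → y = inv x)
    (n : ℕ) (hn : 1 ≤ n) (hid : ∀ x : S, pw x n = pw x (n + 1))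
    (a b : S) :
    pw (a * inv b) n * a = pw (a * inv b) n * b * pw (inv b * a) n ∧
    ∃ e, e * e = e ∧ pw (a * inv b) n * a = e * b := by
  obtain ⟨m, rfl⟩ : ∃ m, n = m + 1 := ⟨n - 1, by omega⟩
  -- stability of powers
  have stA : ∀ d, pw (a * inv b) (m + 1 + d) = pw (a * inv b) (m + 1) :=
    pw_stable _ m (hid (a * inv b))
  have stB : ∀ d, pw (inv b * a) (m + 1 + d) = pw (inv b * a) (m + 1) :=
    pw_stable _ m (hid (inv b * a))
  have idemA : pw (a * inv b) (m + 1) * pw (a * inv b) (m + 1) = pw (a * inv b) (m + 1) := by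
    rw [← pw_add, show m + m + 2 = m + 1 + (m + 1) from by omega, stA]
  have idemPB : pw (inv b * a) (m + 1) * pw (inv b * a) (m + 1) = pw (inv b * a) (m + 1) := by
    rw [← pw_add, show m + m + 2 = m + 1 + (m + 1) from by omega, stB]
  have hBB : (inv b * b) * (inv b * a) = inv b * a := by
    rw [← mul_assoc, h2]
  have habsL : (inv b * b) * pw (inv b * a) (m + 1) = pw (inv b * a) (m + 1) :=
    pw_absorb_left _ _ hBB m
  have hshift : pw (a * inv b) (m + 1) * a = a * pw (inv b * a) (m + 1) :=
    pw_shift a (inv b) m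
  have hAD : (a * inv b) * (b * pw (inv b * a) (m + 1)) = pw (a * inv b) (m + 1) * a := by
    calc (a * inv b) * (b * pw (inv b * a) (m + 1))
        = a * ((inv b * b) * pw (inv b * a) (m + 1)) := by simp only [mul_assoc]
      _ = a * pw (inv b * a) (m + 1) := by rw [habsL]
      _ = pw (a * inv b) (m + 1) * a := hshift.symm
  have conj1' : pw (a * inv b) (m + 1) * b * pw (inv b * a) (m + 1)
      = pw (a * inv b) (m + 1) * a :=
    calc pw (a * inv b) (m + 1) * b * pw (inv b * a) (m + 1)
        = pw (a * inv b) (m + 1) * (b * pw (inv b * a) (m + 1)) := mul_assoc _ _ _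
      _ = pw (a * inv b) (m + 2) * (b * pw (inv b * a) (m + 1)) := by
          rw [← hid (a * inv b)]
      _ = (pw (a * inv b) (m + 1) * (a * inv b)) * (b * pw (inv b * a) (m + 1)) := by
          rw [pw_succ]
      _ = pw (a * inv b) (m + 1) * ((a * inv b) * (b * pw (inv b * a) (m + 1))) := by
          rw [mul_assoc]
      _ = pw (a * inv b) (m + 1) * (pw (a * inv b) (m + 1) * a) := by rw [hAD]
      _ = (pw (a * inv b) (m + 1) * pw (a * inv b) (m + 1)) * a := (mul_assoc _ _ _).symm
      _ = pw (a * inv b) (m + 1) * a := by rw [idemA]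
  have conj1 := conj1'.symm
  refine ⟨conj1, pw (a * inv b) (m + 1), idemA, ?_⟩
  -- now show pw A n * a = pw A n * b
  have idemBB : (inv b * b) * (inv b * b) = inv b * b := by
    rw [← mul_assoc, h2]
  have habsR : pw (inv b * a) (m + 1) * (inv b * b) = pw (inv b * a) (m + 1) :=
    (idem_comm inv h1 h2 huniq idemPB idemBB).trans habsL
  have he_eq : pw (a * inv b) (m + 1) * a * inv b = pw (a * inv b) (m + 1) := by
    rw [mul_assoc, ← pw_succ]
    exact (hid (a * inv b)).symm
  calc pw (a * inv b) (m + 1) * a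
      = pw (a * inv b) (m + 1) * b * pw (inv b * a) (m + 1) := conj1
    _ = pw (a * inv b) (m + 1) * b * (pw (inv b * a) (m + 1) * (inv b * b)) := by
        rw [habsR]
    _ = (pw (a * inv b) (m + 1) * b * pw (inv b * a) (m + 1)) * (inv b * b) := by
        simp only [mul_assoc]
    _ = (pw (a * inv b) (m + 1) * a) * (inv b * b) := by rw [← conj1]
    _ = pw (a * inv b) (m + 1) * b := by rw [← mul_assoc, he_eq]
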